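/- Let X, Y be Banach spaces, x₀* ∈ X* with ‖x₀*‖ = 1 and y₀ ∈ Y with ‖y₀‖ = 1, and let G = x₀* ⊗ y₀ ∈ L(X,Y) be the rank-one operator G(x) = x₀*(x)·y₀. Then n_G(X,Y) = n(X*, x₀*) · n(Y, y₀). -/

import Mathlib

open NormedSpace

/-- Numerical radius of `z` with respect to the unit vector `u`. -/
noncomputable def vRad {Z : Type*} [NormedAddCommGroup Z] [NormedSpace ℝ Z] (u z : Z) : ℝ :=
  sSup {r : ℝ | ∃ φ : StrongDual ℝ Z, ‖φ‖ = 1 ∧ φ u = 1 ∧ |φ z| = r}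

/-- Numerical index of the space with respect to the unit vector `u`. -/
noncomputable def nInd {Z : Type*} [NormedAddCommGroup Z] [NormedSpace ℝ Z] (u : Z) : ℝ :=
  sInf {r : ℝ | ∃ z : Z, ‖z‖ = 1 ∧ vRad u z = r}

/-!
By the Ascoli–Mazur formula, `vRad u z` is the larger of the right derivatives of the norm at `u`
in the directions `z` and `-z`; one inequality is immediate, the other is Hahn–Banach applied to
the sublinear functional `normRightDeriv u`.

Upper bound: if `vRad x₀ x* < A` and `vRad y₀ y < B`, then `‖x₀ + r • x*‖ ≤ 1 + |r| A` and
`‖y₀ + s • y‖ ≤ 1 + |s| B` for small `r`, `s`. Evaluating `G + t • (x* ⊗ y)` at a unit vector `x`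
and factoring out `x₀ x` gives `‖G + t • (x* ⊗ y)‖ ≤ 1 + t A B` for small `t > 0`, hence
`vRad G (x* ⊗ y) ≤ vRad x₀ x* * vRad y₀ y`; now take `x*`, `y` almost minimising.

Lower bound: for a state `ψ` of `Y` at `y₀`, the norm-one map `S ↦ ψ ∘ S` sends `G` to `x₀`, and
such maps do not increase numerical radii. Choosing `ψ` with
`|ψ (T x)| = vRad y₀ (T x) ≥ n(Y, y₀) ‖T x‖` gives
`vRad G T ≥ vRad x₀ (ψ ∘ T) ≥ n(X*, x₀) ‖ψ ∘ T‖ ≥ n(X*, x₀) n(Y, y₀) ‖T x‖`.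
-/

open Set

section NormRightDeriv

variable {Z W : Type*} [NormedAddCommGroup Z] [NormedSpace ℝ Z]
  [NormedAddCommGroup W] [NormedSpace ℝ W]

noncomputable def normSlope (u z : Z) (t : ℝ) : ℝ := (‖u + t • z‖ - ‖u‖) / t

/-- The right derivative at `0` of the convex function `t ↦ ‖u + t • z‖`. -/
noncomputable def normRightDeriv (u z : Z) : ℝ := ⨅ t : Ioi (0 : ℝ), normSlope u z t

theorem convexOn_norm_add_smul (u z : Z) : ConvexOn ℝ univ fun t : ℝ => ‖u + t • z‖ := by
  refine ⟨convex_univ, fun s _ t _ a b ha hb hab => ?_⟩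
  calc ‖u + (a • s + b • t) • z‖ = ‖a • (u + s • z) + b • (u + t • z)‖ := by
        congr 1
        linear_combination (norm := module) -hab • u
    _ ≤ a * ‖u + s • z‖ + b * ‖u + t • z‖ := by
        refine (norm_add_le _ _).trans_eq ?_
        rw [norm_smul_of_nonneg ha, norm_smul_of_nonneg hb]

theorem normSlope_mono (u z : Z) {s t : ℝ} (hs : 0 < s) (hst : s ≤ t) :
    normSlope u z s ≤ normSlope u z t := by
  simpa [normSlope] using (convexOn_norm_add_smul u z).secant_mono (mem_univ 0) (mem_univ s)
    (mem_univ t) hs.ne' (hs.trans_le hst).ne' hst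

theorem abs_normSlope_le (u z : Z) {t : ℝ} (ht : 0 < t) : |normSlope u z t| ≤ ‖z‖ := by
  rw [normSlope, abs_div, abs_of_pos ht, div_le_iff₀ ht]
  calc |‖u + t • z‖ - ‖u‖| ≤ ‖t • z‖ := by simpa using abs_norm_sub_norm_le (u + t • z) u
    _ = ‖z‖ * t := by rw [norm_smul_of_nonneg ht.le, mul_comm]

theorem bddBelow_range_normSlope (u z : Z) :
    BddBelow (range fun t : Ioi (0 : ℝ) => normSlope u z t) :=
  ⟨-‖z‖, by rintro _ ⟨t, rfl⟩; exact neg_le_of_abs_le (abs_normSlope_le u z t.2)⟩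

theorem normRightDeriv_le_normSlope (u z : Z) {t : ℝ} (ht : 0 < t) :
    normRightDeriv u z ≤ normSlope u z t :=
  ciInf_le (bddBelow_range_normSlope u z) ⟨t, ht⟩

theorem le_normRightDeriv {u z : Z} {c : ℝ} (h : ∀ t, 0 < t → c ≤ normSlope u z t) :
    c ≤ normRightDeriv u z :=
  le_ciInf fun t => h t t.2

theorem abs_normRightDeriv_le (u z : Z) : |normRightDeriv u z| ≤ ‖z‖ :=
  abs_le.2 ⟨le_normRightDeriv fun _ ht => neg_le_of_abs_le (abs_normSlope_le u z ht),
    (normRightDeriv_le_normSlope u z one_pos).trans (le_of_abs_le (abs_normSlope_le u z one_pos))⟩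

theorem normRightDeriv_zero (u : Z) : normRightDeriv u 0 = 0 := by
  simpa using abs_normRightDeriv_le u 0

theorem normRightDeriv_neg_self (u : Z) : normRightDeriv u (-u) = -‖u‖ := by
  refine le_antisymm ((normRightDeriv_le_normSlope u (-u) one_pos).trans_eq ?_) ?_
  · simp [normSlope]
  · simpa using neg_le_of_abs_le (abs_normRightDeriv_le u (-u))

theorem normRightDeriv_smul_le (u z : Z) {c : ℝ} (hc : 0 < c) :
    normRightDeriv u (c • z) ≤ c * normRightDeriv u z := by
  unfold normRightDeriv
  rw [Real.mul_iInf_of_nonneg hc.le]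
  refine le_ciInf fun t => (normRightDeriv_le_normSlope u _ (div_pos t.2 hc)).trans_eq ?_
  have ht : (t : ℝ) ≠ 0 := t.2.ne'
  simp only [normSlope, smul_smul, div_mul_cancel₀ _ hc.ne']
  field_simp

theorem normRightDeriv_smul (u z : Z) {c : ℝ} (hc : 0 < c) :
    normRightDeriv u (c • z) = c * normRightDeriv u z := by
  refine le_antisymm (normRightDeriv_smul_le u z hc) ?_
  have h := normRightDeriv_smul_le u (c • z) (inv_pos.2 hc)
  rw [inv_smul_smul₀ hc.ne'] at h
  rwa [← le_inv_mul_iff₀ hc]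

theorem normSlope_add_le (u z₁ z₂ : Z) {t : ℝ} (ht : 0 < t) :
    normSlope u (z₁ + z₂) t ≤ normSlope u z₁ (2 * t) + normSlope u z₂ (2 * t) := by
  have hsplit : u + t • (z₁ + z₂) =
      (1 / 2 : ℝ) • (u + (2 * t) • z₁) + (1 / 2 : ℝ) • (u + (2 * t) • z₂) := by
    module
  have hnorm := norm_add_le ((1 / 2 : ℝ) • (u + (2 * t) • z₁)) ((1 / 2 : ℝ) • (u + (2 * t) • z₂))
  rw [← hsplit, norm_smul_of_nonneg (by norm_num), norm_smul_of_nonneg (by norm_num)] at hnorm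
  simp only [normSlope]
  rw [← add_div, div_le_div_iff₀ ht (by positivity)]
  nlinarith

theorem normRightDeriv_add_le (u z₁ z₂ : Z) :
    normRightDeriv u (z₁ + z₂) ≤ normRightDeriv u z₁ + normRightDeriv u z₂ := by
  have key : ∀ t₁ t₂ : ℝ, 0 < t₁ → 0 < t₂ →
      normRightDeriv u (z₁ + z₂) ≤ normSlope u z₁ t₁ + normSlope u z₂ t₂ := by
    intro t₁ t₂ h₁ h₂
    have ht : 0 < min t₁ t₂ / 2 := by positivity
    calc normRightDeriv u (z₁ + z₂) ≤ normSlope u (z₁ + z₂) (min t₁ t₂ / 2) :=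
          normRightDeriv_le_normSlope u _ ht
      _ ≤ normSlope u z₁ (min t₁ t₂) + normSlope u z₂ (min t₁ t₂) := by
          simpa [mul_div_cancel₀] using normSlope_add_le u z₁ z₂ ht
      _ ≤ normSlope u z₁ t₁ + normSlope u z₂ t₂ :=
          add_le_add (normSlope_mono u z₁ (lt_min h₁ h₂) (min_le_left _ _))
            (normSlope_mono u z₂ (lt_min h₁ h₂) (min_le_right _ _))
  have h₂ : ∀ t₁, 0 < t₁ →
      normRightDeriv u (z₁ + z₂) - normSlope u z₁ t₁ ≤ normRightDeriv u z₂ := fun t₁ h₁ =>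
    le_normRightDeriv fun t₂ h₂ => by linarith [key t₁ t₂ h₁ h₂]
  have h₁ : normRightDeriv u (z₁ + z₂) - normRightDeriv u z₂ ≤ normRightDeriv u z₁ :=
    le_normRightDeriv fun t₁ h₁ => by linarith [h₂ t₁ h₁]
  linarith

theorem normRightDeriv_map_le (L : Z →L[ℝ] W) (hL : ‖L‖ ≤ 1) {u : Z} (hLu : ‖L u‖ = ‖u‖) (z : Z) :
    normRightDeriv (L u) (L z) ≤ normRightDeriv u z := by
  refine le_normRightDeriv fun t ht => (normRightDeriv_le_normSlope _ _ ht).trans ?_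
  rw [normSlope, normSlope, hLu, ← map_smul, ← map_add]
  gcongr
  exact L.le_of_opNorm_le hL _ |>.trans_eq (one_mul _)

theorem apply_le_normRightDeriv {u : Z} (φ : StrongDual ℝ Z) (hφ : ‖φ‖ ≤ 1) (hφu : φ u = ‖u‖)
    (z : Z) : φ z ≤ normRightDeriv u z := by
  refine le_normRightDeriv fun t ht => ?_
  rw [normSlope, le_div_iff₀ ht, ← hφu]
  have h := (le_abs_self _).trans ((φ.le_of_opNorm_le hφ (u + t • z)).trans_eq (one_mul _))
  rw [map_add, map_smul, smul_eq_mul] at h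
  linarith

theorem normRightDeriv_add_neg_nonneg (u z : Z) :
    0 ≤ normRightDeriv u z + normRightDeriv u (-z) := by
  simpa [normRightDeriv_zero] using normRightDeriv_add_le u z (-z)

theorem exists_linearMap_le_normRightDeriv (u z : Z) :
    ∃ g : Z →ₗ[ℝ] ℝ, g z = normRightDeriv u z ∧ ∀ x, g x ≤ normRightDeriv u x := by
  let f : Z →ₗ.[ℝ] ℝ := LinearPMap.mkSpanSingleton' z (normRightDeriv u z) fun c hc => by
    rcases smul_eq_zero.1 hc with rfl | rfl
    · exact zero_smul _ _
    · simp [normRightDeriv_zero]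
  have hf : ∀ x : f.domain, f x ≤ normRightDeriv u x := by
    rintro ⟨_, hx⟩
    obtain ⟨c, rfl⟩ := Submodule.mem_span_singleton.1 hx
    simp only [f, LinearPMap.mkSpanSingleton'_apply, RingHom.id_apply, smul_eq_mul]
    rcases lt_trichotomy c 0 with hc | rfl | hc
    · rw [← neg_smul_neg c z, normRightDeriv_smul u _ (neg_pos.2 hc)]
      nlinarith [normRightDeriv_add_neg_nonneg u z]
    · simp [normRightDeriv_zero]
    · rw [normRightDeriv_smul u z hc]
  obtain ⟨g, hgf, hg⟩ := exists_extension_of_le_sublinear f (normRightDeriv u)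
    (fun c hc x => normRightDeriv_smul u x hc) (normRightDeriv_add_le u) hf
  refine ⟨g, ?_, hg⟩
  exact (hgf ⟨z, Submodule.mem_span_singleton_self z⟩).trans
    (LinearPMap.mkSpanSingleton'_apply_self _ _ _ _)

theorem exists_apply_eq_normRightDeriv {u : Z} (hu : u ≠ 0) (z : Z) :
    ∃ φ : StrongDual ℝ Z, ‖φ‖ = 1 ∧ φ u = ‖u‖ ∧ φ z = normRightDeriv u z := by
  obtain ⟨g, hgz, hg⟩ := exists_linearMap_le_normRightDeriv u z
  have hg_abs : ∀ x, |g x| ≤ ‖x‖ := fun x => abs_le.2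
    ⟨neg_le.1 <| by simpa using (hg (-x)).trans (le_of_abs_le (abs_normRightDeriv_le u (-x))),
      (hg x).trans (le_of_abs_le (abs_normRightDeriv_le u x))⟩
  have hgu : g u = ‖u‖ := le_antisymm (le_of_abs_le (hg_abs u)) <| by
    simpa [normRightDeriv_neg_self] using hg (-u)
  let φ : StrongDual ℝ Z := g.mkContinuous 1 fun x => by simpa using hg_abs x
  have hφ : ‖φ‖ ≤ 1 := g.mkContinuous_norm_le zero_le_one _
  refine ⟨φ, le_antisymm hφ ?_, hgu, hgz⟩
  have h := φ.le_opNorm u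
  rw [show φ u = ‖u‖ from hgu, Real.norm_of_nonneg (norm_nonneg u)] at h
  exact (le_mul_iff_one_le_left (norm_pos_iff.2 hu)).1 h

end NormRightDeriv

section NumericalRadius

variable {Z W : Type*} [NormedAddCommGroup Z] [NormedSpace ℝ Z]
  [NormedAddCommGroup W] [NormedSpace ℝ W]

theorem exists_abs_apply_eq_max_normRightDeriv {u : Z} (hu : ‖u‖ = 1) (z : Z) :
    ∃ φ : StrongDual ℝ Z, ‖φ‖ = 1 ∧ φ u = 1 ∧
      |φ z| = max (normRightDeriv u z) (normRightDeriv u (-z)) := by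
  have hM : 0 ≤ max (normRightDeriv u z) (normRightDeriv u (-z)) := by
    linarith [le_max_left (normRightDeriv u z) (normRightDeriv u (-z)),
      le_max_right (normRightDeriv u z) (normRightDeriv u (-z)),
      normRightDeriv_add_neg_nonneg u z]
  obtain ⟨w, hw, hwM⟩ : ∃ w, (w = z ∨ w = -z) ∧
      normRightDeriv u w = max (normRightDeriv u z) (normRightDeriv u (-z)) := by
    rcases max_choice (normRightDeriv u z) (normRightDeriv u (-z)) with h | h
    exacts [⟨z, .inl rfl, h.symm⟩, ⟨-z, .inr rfl, h.symm⟩]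
  obtain ⟨φ, hφ, hφu, hφw⟩ :=
    exists_apply_eq_normRightDeriv (norm_ne_zero_iff.1 (hu ▸ one_ne_zero)) w
  refine ⟨φ, hφ, hφu.trans hu, ?_⟩
  have habs : |φ w| = |φ z| := by rcases hw with rfl | rfl <;> simp
  rw [← habs, hφw, hwM, abs_of_nonneg hM]

theorem abs_apply_le_max_normRightDeriv {u : Z} (hu : ‖u‖ = 1) {φ : StrongDual ℝ Z}
    (hφ : ‖φ‖ = 1) (hφu : φ u = 1) (z : Z) :
    |φ z| ≤ max (normRightDeriv u z) (normRightDeriv u (-z)) := by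
  have h := apply_le_normRightDeriv φ hφ.le (hφu.trans hu.symm)
  refine abs_le.2 ⟨?_, (h z).trans (le_max_left _ _)⟩
  linarith [h (-z), map_neg φ z, le_max_right (normRightDeriv u z) (normRightDeriv u (-z))]

theorem vRad_eq_max {u : Z} (hu : ‖u‖ = 1) (z : Z) :
    vRad u z = max (normRightDeriv u z) (normRightDeriv u (-z)) :=
  IsGreatest.csSup_eq ⟨exists_abs_apply_eq_max_normRightDeriv hu z,
    by rintro _ ⟨φ, hφ, hφu, rfl⟩; exact abs_apply_le_max_normRightDeriv hu hφ hφu z⟩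

theorem exists_abs_apply_eq_vRad {u : Z} (hu : ‖u‖ = 1) (z : Z) :
    ∃ φ : StrongDual ℝ Z, ‖φ‖ = 1 ∧ φ u = 1 ∧ |φ z| = vRad u z :=
  vRad_eq_max hu z ▸ exists_abs_apply_eq_max_normRightDeriv hu z

theorem vRad_nonneg (u z : Z) : 0 ≤ vRad u z :=
  Real.sSup_nonneg <| by rintro _ ⟨φ, -, -, rfl⟩; exact abs_nonneg _

theorem vRad_smul (u z : Z) (c : ℝ) : vRad u (c • z) = |c| * vRad u z := by
  unfold vRad
  rw [← smul_eq_mul, ← Real.sSup_smul_of_nonneg (abs_nonneg c)]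
  congr 1
  ext r
  simp [Set.mem_smul_set, abs_mul, and_assoc]

theorem vRad_neg (u z : Z) : vRad u (-z) = vRad u z := by
  simpa using vRad_smul u z (-1)

theorem vRad_map_le (L : Z →L[ℝ] W) (hL : ‖L‖ ≤ 1) {u : Z} (hu : ‖u‖ = 1) (hLu : ‖L u‖ = 1)
    (z : Z) : vRad (L u) (L z) ≤ vRad u z := by
  rw [vRad_eq_max hLu, vRad_eq_max hu, ← map_neg]
  exact max_le_max (normRightDeriv_map_le L hL (hLu.trans hu.symm) z)
    (normRightDeriv_map_le L hL (hLu.trans hu.symm) (-z))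

theorem exists_norm_add_smul_le_of_normRightDeriv_lt {u z : Z} {c : ℝ}
    (h : normRightDeriv u z < c) :
    ∃ t₀ > 0, ∀ t, 0 ≤ t → t ≤ t₀ → ‖u + t • z‖ ≤ ‖u‖ + t * c := by
  obtain ⟨⟨t₀, ht₀⟩, hlt⟩ := exists_lt_of_ciInf_lt h
  refine ⟨t₀, ht₀, fun t ht0 htt => ?_⟩
  rcases ht0.eq_or_lt with rfl | ht
  · simp
  · have h' := (normSlope_mono u z ht htt).trans_lt hlt
    rw [normSlope, div_lt_iff₀ ht] at h'
    linarith

theorem exists_norm_add_smul_le_of_vRad_lt {u z : Z} (hu : ‖u‖ = 1) {c : ℝ} (h : vRad u z < c) :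
    ∃ r₀ > 0, ∀ r, |r| ≤ r₀ → ‖u + r • z‖ ≤ 1 + |r| * c := by
  rw [vRad_eq_max hu, max_lt_iff] at h
  obtain ⟨t₁, ht₁, h₁⟩ := exists_norm_add_smul_le_of_normRightDeriv_lt h.1
  obtain ⟨t₂, ht₂, h₂⟩ := exists_norm_add_smul_le_of_normRightDeriv_lt h.2
  refine ⟨min t₁ t₂, lt_min ht₁ ht₂, fun r hr => ?_⟩
  rw [← hu]
  rcases le_total 0 r with h0 | h0
  · rw [abs_of_nonneg h0] at hr ⊢
    exact h₁ r h0 (hr.trans (min_le_left _ _))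
  · rw [abs_of_nonpos h0] at hr ⊢
    simpa using h₂ (-r) (neg_nonneg.2 h0) (hr.trans (min_le_right _ _))

theorem nInd_nonneg (u : Z) : 0 ≤ nInd u :=
  Real.sInf_nonneg <| by rintro _ ⟨z, -, rfl⟩; exact vRad_nonneg u z

theorem nInd_le_vRad (u : Z) {z : Z} (hz : ‖z‖ = 1) : nInd u ≤ vRad u z :=
  csInf_le ⟨0, by rintro _ ⟨w, -, rfl⟩; exact vRad_nonneg u w⟩ ⟨z, hz, rfl⟩

theorem le_nInd {u : Z} (hu : ‖u‖ = 1) {k : ℝ} (h : ∀ z : Z, ‖z‖ = 1 → k ≤ vRad u z) :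
    k ≤ nInd u :=
  le_csInf ⟨_, u, hu, rfl⟩ <| by rintro _ ⟨z, hz, rfl⟩; exact h z hz

theorem exists_vRad_lt_nInd_add {u : Z} (hu : ‖u‖ = 1) {ε : ℝ} (hε : 0 < ε) :
    ∃ z : Z, ‖z‖ = 1 ∧ vRad u z < nInd u + ε := by
  have hne : {r : ℝ | ∃ z : Z, ‖z‖ = 1 ∧ vRad u z = r}.Nonempty := ⟨_, u, hu, rfl⟩
  obtain ⟨_, ⟨z, hz, rfl⟩, h⟩ := exists_lt_of_csInf_lt hne (lt_add_of_pos_right (nInd u) hε)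
  exact ⟨z, hz, h⟩

theorem nInd_mul_norm_le_vRad (u z : Z) : nInd u * ‖z‖ ≤ vRad u z := by
  rcases eq_or_ne z 0 with rfl | hz
  · simpa using vRad_nonneg u 0
  · have hnz : ‖z‖ ≠ 0 := norm_ne_zero_iff.2 hz
    calc nInd u * ‖z‖ ≤ vRad u ((‖z‖⁻¹ : ℝ) • z) * ‖z‖ :=
          mul_le_mul_of_nonneg_right (nInd_le_vRad u (norm_smul_inv_norm hz)) (norm_nonneg z)
      _ = vRad u z := by rw [vRad_smul, abs_inv, abs_norm]; field_simp

end NumericalRadius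

theorem abs_add_mul_abs_le_max (a b c : ℝ) : |a| + c * |b| ≤ max |a + c * b| |a - c * b| := by
  rcases abs_cases a with ⟨ha, -⟩ | ⟨ha, -⟩ <;> rcases abs_cases b with ⟨hb, -⟩ | ⟨hb, -⟩ <;>
    rw [ha, hb]
  · exact le_max_of_le_left ((le_abs_self _).trans_eq' (by ring))
  · exact le_max_of_le_right ((le_abs_self _).trans_eq' (by ring))
  · exact le_max_of_le_right ((neg_le_abs _).trans_eq' (by ring))
  · exact le_max_of_le_left ((neg_le_abs _).trans_eq' (by ring))

open Filter Topology in
theorem le_mul_of_forall_pos_le_add_mul_add {p a b : ℝ} (h : ∀ ε > 0, p ≤ (a + ε) * (b + ε)) :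
    p ≤ a * b := by
  have hlim : Tendsto (fun ε => (a + ε) * (b + ε)) (𝓝[>] 0) (𝓝 (a * b)) := by
    have hcont : Continuous fun ε : ℝ => (a + ε) * (b + ε) := by fun_prop
    simpa using (hcont.tendsto 0).mono_left nhdsWithin_le_nhds
  exact ge_of_tendsto hlim (eventually_nhdsWithin_of_forall h)

section RankOne

variable {X Y : Type*} [NormedAddCommGroup X] [NormedSpace ℝ X]
  [NormedAddCommGroup Y] [NormedSpace ℝ Y]

theorem abs_add_mul_abs_le_of_norm_add_smul_le {f g : StrongDual ℝ X} {r₀ A : ℝ}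
    (h : ∀ r, |r| ≤ r₀ → ‖f + r • g‖ ≤ 1 + |r| * A) (hr₀ : 0 ≤ r₀) {x : X} (hx : ‖x‖ ≤ 1) :
    |f x| + r₀ * |g x| ≤ 1 + r₀ * A := by
  have hbound : ∀ r, |r| = r₀ → |f x + r * g x| ≤ 1 + r₀ * A := fun r hr => by
    have h' := h r hr.le
    rw [hr] at h'
    calc |f x + r * g x| = ‖(f + r • g) x‖ := by simp
      _ ≤ ‖f + r • g‖ * ‖x‖ := (f + r • g).le_opNorm x
      _ ≤ 1 + r₀ * A := by nlinarith [norm_nonneg (f + r • g), norm_nonneg x]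
  refine (abs_add_mul_abs_le_max _ _ r₀).trans (max_le ?_ ?_)
  · exact hbound r₀ (abs_of_nonneg hr₀)
  · simpa [sub_eq_add_neg] using hbound (-r₀) (by rw [abs_neg, abs_of_nonneg hr₀])

theorem norm_smul_add_smul_le_of_norm_add_smul_le {y₀ y : Y} {s₀ B : ℝ}
    (h : ∀ s, |s| ≤ s₀ → ‖y₀ + s • y‖ ≤ 1 + |s| * B) {α γ : ℝ} (hγ : |γ| ≤ s₀ * |α|) :
    ‖α • y₀ + γ • y‖ ≤ |α| + |γ| * B := by
  rcases eq_or_ne α 0 with rfl | hα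
  · obtain rfl : γ = 0 := abs_nonpos_iff.1 (by simpa using hγ)
    simp
  · have hα' : 0 < |α| := abs_pos.2 hα
    have hs : |γ / α| ≤ s₀ := by rwa [abs_div, div_le_iff₀ hα']
    calc ‖α • y₀ + γ • y‖ = |α| * ‖y₀ + (γ / α) • y‖ := by
          rw [← Real.norm_eq_abs, ← norm_smul, smul_add, smul_smul, mul_div_cancel₀ _ hα]
      _ ≤ |α| * (1 + |γ / α| * B) := mul_le_mul_of_nonneg_left (h _ hs) hα'.le
      _ = |α| + |γ| * B := by rw [abs_div]; field_simp

theorem norm_smulRight_add_smul_smulRight_le {x₀ xs : StrongDual ℝ X} {y₀ y : Y}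
    {r₀ s₀ A B t : ℝ} (hX : ∀ r, |r| ≤ r₀ → ‖x₀ + r • xs‖ ≤ 1 + |r| * A)
    (hY : ∀ s, |s| ≤ s₀ → ‖y₀ + s • y‖ ≤ 1 + |s| * B) (hxs : ‖xs‖ ≤ 1) (hy : ‖y‖ ≤ 1)
    (hr₀ : 0 < r₀) (hs₀ : 0 < s₀) (hA : 0 ≤ A) (hB : 0 ≤ B) (ht : 0 < t)
    (htr : t * B ≤ r₀) (hts : t * (1 + s₀) ≤ s₀) :
    ‖x₀.smulRight y₀ + t • xs.smulRight y‖ ≤ 1 + t * (A * B) := by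
  have hx₀ : ‖x₀‖ ≤ 1 := by simpa using hX 0 (by simpa using hr₀.le)
  have hy₀ : ‖y₀‖ ≤ 1 := by simpa using hY 0 (by simpa using hs₀.le)
  refine ContinuousLinearMap.opNorm_le_of_unit_norm (by positivity) fun x hx => ?_
  have hα : |x₀ x| ≤ 1 := by simpa [hx] using x₀.le_of_opNorm_le hx₀ x
  have hβ : |xs x| ≤ 1 := by simpa [hx] using xs.le_of_opNorm_le hxs x
  have hαβ := abs_add_mul_abs_le_of_norm_add_smul_le hX hr₀.le hx.le
  have hval : (x₀.smulRight y₀ + t • xs.smulRight y) x = x₀ x • y₀ + (t * xs x) • y := by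
    simp [smul_smul]
  rw [hval]
  -- factor out `x₀ x` when it dominates; otherwise the vector is short outright
  rcases le_or_gt |t * xs x| (s₀ * |x₀ x|) with hsmall | hlarge
  · calc ‖x₀ x • y₀ + (t * xs x) • y‖ ≤ |x₀ x| + |t * xs x| * B :=
          norm_smul_add_smul_le_of_norm_add_smul_le hY hsmall
      _ ≤ 1 + t * (A * B) := by
          rw [abs_mul, abs_of_pos ht]
          nlinarith [mul_nonneg (sub_nonneg.2 htr) (sub_nonneg.2 hα), mul_nonneg ht.le hB]
  · calc ‖x₀ x • y₀ + (t * xs x) • y‖ ≤ |x₀ x| + |t * xs x| := by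
          refine norm_add_le_of_le ?_ ?_ <;> rw [norm_smul, Real.norm_eq_abs]
          exacts [mul_le_of_le_one_right (abs_nonneg _) hy₀,
            mul_le_of_le_one_right (abs_nonneg _) hy]
      _ ≤ |xs x| := by
          rw [abs_mul, abs_of_pos ht] at hlarge ⊢
          nlinarith [abs_nonneg (xs x)]
      _ ≤ 1 + t * (A * B) := by nlinarith [mul_nonneg ht.le (mul_nonneg hA hB)]

theorem normRightDeriv_smulRight_le {x₀ xs : StrongDual ℝ X} {y₀ y : Y} (hx₀ : ‖x₀‖ = 1)
    (hxs : ‖xs‖ ≤ 1) (hy₀ : ‖y₀‖ = 1) (hy : ‖y‖ ≤ 1) :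
    normRightDeriv (x₀.smulRight y₀) (xs.smulRight y) ≤ vRad x₀ xs * vRad y₀ y := by
  refine le_mul_of_forall_pos_le_add_mul_add fun ε hε => ?_
  obtain ⟨r₀, hr₀, hX⟩ := exists_norm_add_smul_le_of_vRad_lt hx₀ (lt_add_of_pos_right _ hε)
  obtain ⟨s₀, hs₀, hY⟩ := exists_norm_add_smul_le_of_vRad_lt hy₀ (lt_add_of_pos_right _ hε)
  have hA : 0 ≤ vRad x₀ xs + ε := by linarith [vRad_nonneg x₀ xs]
  have hB : 0 < vRad y₀ y + ε := by linarith [vRad_nonneg y₀ y]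
  set t := min (r₀ / (vRad y₀ y + ε)) (s₀ / (1 + s₀))
  have ht : 0 < t := lt_min (by positivity) (by positivity)
  have htr : t * (vRad y₀ y + ε) ≤ r₀ := (le_div_iff₀ hB).1 (min_le_left _ _)
  have hts : t * (1 + s₀) ≤ s₀ := (le_div_iff₀ (by positivity)).1 (min_le_right _ _)
  have hnorm := norm_smulRight_add_smul_smulRight_le hX hY hxs hy hr₀ hs₀ hA hB.le ht htr hts
  refine (normRightDeriv_le_normSlope _ _ ht).trans ?_
  rw [normSlope, div_le_iff₀ ht]
  simp only [ContinuousLinearMap.norm_smulRight_apply, hx₀, hy₀, one_mul]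
  linarith

theorem vRad_smulRight_le {x₀ xs : StrongDual ℝ X} {y₀ y : Y} (hx₀ : ‖x₀‖ = 1) (hxs : ‖xs‖ ≤ 1)
    (hy₀ : ‖y₀‖ = 1) (hy : ‖y‖ ≤ 1) :
    vRad (x₀.smulRight y₀) (xs.smulRight y) ≤ vRad x₀ xs * vRad y₀ y := by
  have hG : ‖x₀.smulRight y₀‖ = 1 := by simp [hx₀, hy₀]
  have hneg : -xs.smulRight y = (-xs).smulRight y := by ext; simp
  rw [vRad_eq_max hG, hneg]
  refine max_le (normRightDeriv_smulRight_le hx₀ hxs hy₀ hy) ?_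
  rw [← vRad_neg x₀ xs]
  exact normRightDeriv_smulRight_le hx₀ (by rwa [norm_neg]) hy₀ hy

theorem mul_nInd_mul_norm_le_vRad_smulRight {x₀ : StrongDual ℝ X} {y₀ : Y} (hx₀ : ‖x₀‖ = 1)
    (hy₀ : ‖y₀‖ = 1) (T : X →L[ℝ] Y) :
    nInd x₀ * nInd y₀ * ‖T‖ ≤ vRad (x₀.smulRight y₀) T := by
  have hG : ‖x₀.smulRight y₀‖ = 1 := by simp [hx₀, hy₀]
  have hk : 0 ≤ nInd x₀ * nInd y₀ := mul_nonneg (nInd_nonneg x₀) (nInd_nonneg y₀)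
  have hbound : ∀ x, ‖(nInd x₀ * nInd y₀) • T x‖ ≤ vRad (x₀.smulRight y₀) T * ‖x‖ := by
    intro x
    obtain ⟨ψ, hψ, hψy₀, hψT⟩ := exists_abs_apply_eq_vRad hy₀ (T x)
    let L := ContinuousLinearMap.compL ℝ X Y ℝ ψ
    have hL : ‖L‖ ≤ 1 := L.opNorm_le_bound zero_le_one fun S =>
      (ψ.opNorm_comp_le S).trans_eq (by rw [hψ])
    have hLG : L (x₀.smulRight y₀) = x₀ := by ext; simp [L, hψy₀]
    calc ‖(nInd x₀ * nInd y₀) • T x‖ = nInd x₀ * (nInd y₀ * ‖T x‖) := by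
          rw [norm_smul, Real.norm_of_nonneg hk, mul_assoc]
      _ ≤ nInd x₀ * (‖ψ.comp T‖ * ‖x‖) := by
          refine mul_le_mul_of_nonneg_left ?_ (nInd_nonneg _)
          calc nInd y₀ * ‖T x‖ ≤ vRad y₀ (T x) := nInd_mul_norm_le_vRad y₀ (T x)
            _ = ‖(ψ.comp T) x‖ := hψT.symm
            _ ≤ ‖ψ.comp T‖ * ‖x‖ := (ψ.comp T).le_opNorm x
      _ ≤ vRad x₀ (ψ.comp T) * ‖x‖ := by
          rw [← mul_assoc]
          exact mul_le_mul_of_nonneg_right (nInd_mul_norm_le_vRad _ _) (norm_nonneg x)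
      _ ≤ vRad (x₀.smulRight y₀) T * ‖x‖ := by
          refine mul_le_mul_of_nonneg_right ?_ (norm_nonneg x)
          simpa [hLG, L] using vRad_map_le L hL hG (by rw [hLG, hx₀]) T
  have h := ((nInd x₀ * nInd y₀) • T).opNorm_le_bound (vRad_nonneg _ _) hbound
  rwa [norm_smul, Real.norm_of_nonneg hk] at h

end RankOne

theorem stmt15_general {X Y : Type*} [NormedAddCommGroup X] [NormedSpace ℝ X]
    [NormedAddCommGroup Y] [NormedSpace ℝ Y]
    (x₀ : X →L[ℝ] ℝ) (hx₀ : ‖x₀‖ = 1) (y₀ : Y) (hy₀ : ‖y₀‖ = 1) :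
    nInd (x₀.smulRight y₀) = nInd x₀ * nInd y₀ := by
  have hG : ‖x₀.smulRight y₀‖ = 1 := by simp [hx₀, hy₀]
  refine le_antisymm (le_mul_of_forall_pos_le_add_mul_add fun ε hε => ?_)
    (le_nInd hG fun T hT => ?_)
  · obtain ⟨xs, hxs, hxsε⟩ := exists_vRad_lt_nInd_add hx₀ hε
    obtain ⟨y, hy, hyε⟩ := exists_vRad_lt_nInd_add hy₀ hε
    calc nInd (x₀.smulRight y₀) ≤ vRad (x₀.smulRight y₀) (xs.smulRight y) :=
          nInd_le_vRad _ (by simp [hxs, hy])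
      _ ≤ vRad x₀ xs * vRad y₀ y := vRad_smulRight_le hx₀ hxs.le hy₀ hy.le
      _ ≤ (nInd x₀ + ε) * (nInd y₀ + ε) :=
          mul_le_mul hxsε.le hyε.le (vRad_nonneg _ _) (by linarith [nInd_nonneg x₀])
  · simpa [hT] using mul_nInd_mul_norm_le_vRad_smulRight hx₀ hy₀ T

theorem stmt15 {X Y : Type*} [NormedAddCommGroup X] [NormedSpace ℝ X] [CompleteSpace X]
    [NormedAddCommGroup Y] [NormedSpace ℝ Y] [CompleteSpace Y]
    (x₀ : X →L[ℝ] ℝ) (hx₀ : ‖x₀‖ = 1) (y₀ : Y) (hy₀ : ‖y₀‖ = 1) :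
    nInd (x₀.smulRight y₀) = nInd x₀ * nInd y₀ :=
  stmt15_general x₀ hx₀ y₀ hy₀
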